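/- Let G be a group and x1, g1, x2, g2, x3, g3 ∈ G. Suppose [x1g1, x2g2, x3g3] = 1, [x1g1, x2g2, x3] = 1, [x1g1, x2, x3g2] = 1, [x1g1, x2, x3] = 1, and [x1g1, x2, x3g3] = 1. Then [x1g1, g2, g3] = 1, i.e., [[x1,g2]^{g1}·[g1,g2], g3] = 1. -/
import Mathlib


/-- The commutator `[a,b] = a⁻¹ * b⁻¹ * a * b`. -/
def pcomm {G : Type*} [Group G] (a b : G) : G := a⁻¹ * b⁻¹ * a * b

/-- The triple commutator `[a,b,c] = [[a,b],c]`. -/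
def pcomm3 {G : Type*} [Group G] (a b c : G) : G := pcomm (pcomm a b) c

/-- Conjugation `a ^ b = b⁻¹ * a * b`. -/
def pconj {G : Type*} [Group G] (a b : G) : G := b⁻¹ * a * b

lemma pcomm_eq_one_iff {G : Type*} [Group G] (a b : G) :
    pcomm a b = 1 ↔ Commute a b := by
  unfold pcomm
  rw [show a⁻¹ * b⁻¹ * a * b = (b * a)⁻¹ * (a * b) by group, inv_mul_eq_one]
  exact eq_comm

theorem step_I {G : Type*} [Group G] (x₁ x₂ x₃ g₁ g₂ g₃ : G)
    (h2 : pcomm3 (x₁ * g₁) (x₂ * g₂) (x₃ * g₃) = 1)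
    (h3 : pcomm3 (x₁ * g₁) (x₂ * g₂) x₃ = 1)
    (h4 : pcomm3 (x₁ * g₁) x₂ (x₃ * g₂) = 1)
    (h5 : pcomm3 (x₁ * g₁) x₂ x₃ = 1)
    (h6 : pcomm3 (x₁ * g₁) x₂ (x₃ * g₃) = 1) :
    pcomm3 (x₁ * g₁) g₂ g₃ = 1 ∧
      pcomm (pconj (pcomm x₁ g₂) g₁ * pcomm g₁ g₂) g₃ = 1 := by
  set a := x₁ * g₁ with ha
  have H2 : Commute (pcomm a (x₂ * g₂)) (x₃ * g₃) := (pcomm_eq_one_iff _ _).mp h2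
  have H3 : Commute (pcomm a (x₂ * g₂)) x₃ := (pcomm_eq_one_iff _ _).mp h3
  have H4 : Commute (pcomm a x₂) (x₃ * g₂) := (pcomm_eq_one_iff _ _).mp h4
  have H5 : Commute (pcomm a x₂) x₃ := (pcomm_eq_one_iff _ _).mp h5
  have H6 : Commute (pcomm a x₂) (x₃ * g₃) := (pcomm_eq_one_iff _ _).mp h6
  have hA : Commute (pcomm a (x₂ * g₂)) g₃ := by
    have := H3.inv_right.mul_right H2
    simpa [inv_mul_cancel_left] using this
  have hB : Commute (pcomm a x₂) g₂ := by
    have := H5.inv_right.mul_right H4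
    simpa [inv_mul_cancel_left] using this
  have hC : Commute (pcomm a x₂) g₃ := by
    have := H5.inv_right.mul_right H6
    simpa [inv_mul_cancel_left] using this
  have key : pcomm a (x₂ * g₂) = pcomm a g₂ * (g₂⁻¹ * pcomm a x₂ * g₂) := by
    unfold pcomm; group
  have key2 : pcomm a g₂ = pcomm a (x₂ * g₂) * (pcomm a x₂)⁻¹ := by
    rw [key]
    have : g₂⁻¹ * pcomm a x₂ * g₂ = pcomm a x₂ := by
      rw [mul_assoc, hB.eq, ← mul_assoc, inv_mul_cancel, one_mul]
    rw [this, mul_assoc, mul_inv_cancel, mul_one]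
  have main : Commute (pcomm a g₂) g₃ := by
    rw [key2]; exact hA.mul_left hC.inv_left
  have goal1 : pcomm3 a g₂ g₃ = 1 := (pcomm_eq_one_iff _ _).mpr main
  refine ⟨goal1, ?_⟩
  have hid : pconj (pcomm x₁ g₂) g₁ * pcomm g₁ g₂ = pcomm a g₂ := by
    rw [ha]; unfold pconj pcomm; group
  rw [hid]
  exact (pcomm_eq_one_iff _ _).mpr main
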